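/- arXiv:2308.02175 — 3 statements merged into one kernel-verified Lean document; each statement's English description precedes it below -/
import Mathlib

section
/- Let T be an invertible measure-preserving transformation of a probability space (X, μ) and f ∈ L²_μ such that the Krylov basis ℬ_d = (f, f∘T⁻¹, …, f∘T^{−d+1}) is linearly independent. Let c = (c_0, …, c_{d−1}) ∈ ℂ^d be the unique minimizer of J(c) = ∫_X |f(Tx) − Σ_{j=0}^{d−1} c_j f(T^{−j}x)|² dμ(x), and define the linear operator 𝒰_d : 𝒦_d → 𝒦_d on the basis ℬ_d by 𝒰_d(f∘T^{−j}) = f∘T^{−j+1} for j = 1, …, d−1 and 𝒰_d f = Σ_{j=0}^{d−1} c_j f∘T^{−j}. Then for every g ∈ 𝒦_d one has 𝒰_d g = Π_{𝒦_d}(g∘T); that is, 𝒰_d is the L²_μ-orthogonal projection of the Koopman operator 𝒰 onto 𝒦_d. -/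
/-! The least-squares coefficients `c` make `∑ⱼ cⱼ 𝒰'ʲ f` the best approximation of `𝒰 f` in `𝒦_d`,
i.e. its orthogonal projection. On the remaining generators `𝒰'ʲ f` (`j ≥ 1`) the Koopman operator
undoes one step of `𝒰'`, landing on `𝒰'ʲ⁻¹ f ∈ 𝒦_d`, which the projection fixes. Both sides of the
identity being linear, agreement on the generators of `𝒦_d` suffices. -/

open MeasureTheory Filter

/-- The Koopman operator `𝒰_T : g ↦ g ∘ T` on `L²_μ`. -/
noncomputable def koopman {X : Type*} [MeasurableSpace X] {μ : Measure X}
    (T : X → X) (hT : MeasurePreserving T μ μ) : Lp ℂ 2 μ →L[ℂ] Lp ℂ 2 μ :=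
  (Lp.compMeasurePreservingₗᵢ ℂ T hT).toContinuousLinearMap

/-- The Krylov space `𝒦_d = span {f, f∘T⁻¹, …, f∘T^{-d+1}}`, where `T'` plays the role of
the (essential) inverse of `T`. -/
noncomputable def krylov {X : Type*} [MeasurableSpace X] {μ : Measure X}
    (T' : X → X) (hT' : MeasurePreserving T' μ μ) (f : Lp ℂ 2 μ) (d : ℕ) :
    Submodule ℂ (Lp ℂ 2 μ) :=
  Submodule.span ℂ (Set.range fun j : Fin d => ((koopman T' hT') ^ (j : ℕ)) f)

instance {X : Type*} [MeasurableSpace X] {μ : Measure X}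
    (T' : X → X) (hT' : MeasurePreserving T' μ μ) (f : Lp ℂ 2 μ) (d : ℕ) :
    FiniteDimensional ℂ (krylov T' hT' f d) :=
  FiniteDimensional.span_of_finite ℂ (Set.finite_range _)

namespace Submodule

variable {𝕜 E : Type*} [RCLike 𝕜] [NormedAddCommGroup E] [InnerProductSpace 𝕜 E]

theorem starProjection_eq_of_forall_norm_sub_le {K : Submodule 𝕜 E} [K.HasOrthogonalProjection]
    {u w : E} (hw : w ∈ K) (hmin : ∀ v ∈ K, ‖u - w‖ ≤ ‖u - v‖) : K.starProjection u = w := by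
  refine eq_starProjection_of_mem_of_inner_eq_zero hw ?_
  rw [← norm_eq_iInf_iff_inner_eq_zero K hw]
  have hbdd : BddBelow (Set.range fun v : K => ‖u - v‖) :=
    ⟨0, by rintro _ ⟨v, rfl⟩; exact norm_nonneg _⟩
  exact le_antisymm (le_ciInf fun v => hmin v v.2) (ciInf_le hbdd ⟨w, hw⟩)

theorem starProjection_eq_sum_of_forall_norm_sub_le {ι : Type*} [Fintype ι]
    {K : Submodule 𝕜 E} [K.HasOrthogonalProjection] {b : ι → E} (hK : span 𝕜 (Set.range b) = K)
    {u : E} {c : ι → 𝕜} (hmin : ∀ c' : ι → 𝕜, ‖u - ∑ i, c i • b i‖ ≤ ‖u - ∑ i, c' i • b i‖) :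
    K.starProjection u = ∑ i, c i • b i := by
  subst hK
  refine starProjection_eq_of_forall_norm_sub_le
    (sum_mem fun i _ => smul_mem _ _ (subset_span ⟨i, rfl⟩)) fun v hv => ?_
  obtain ⟨c', rfl⟩ := mem_span_range_iff_exists_fun 𝕜 |>.1 hv
  exact hmin c'

end Submodule

section Koopman

variable {X : Type*} [MeasurableSpace X] {μ : Measure X} {T T' : X → X}

theorem koopman_koopman_of_ae_leftInverse (hT : MeasurePreserving T μ μ)
    (hT' : MeasurePreserving T' μ μ) (hinv : ∀ᵐ x ∂μ, T' (T x) = x) (g : Lp ℂ 2 μ) :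
    koopman T hT (koopman T' hT' g) = g := by
  apply Lp.ext
  have hT_comp :
      (koopman T hT (koopman T' hT' g) : X → ℂ) =ᵐ[μ] (koopman T' hT' g : X → ℂ) ∘ T :=
    Lp.coeFn_compMeasurePreserving _ hT
  have hT'_comp : (koopman T' hT' g : X → ℂ) ∘ T =ᵐ[μ] ((g : X → ℂ) ∘ T') ∘ T :=
    ae_eq_comp hT.aemeasurable (by rw [hT.map_eq]; exact Lp.coeFn_compMeasurePreserving g hT')
  refine hT_comp.trans (hT'_comp.trans ?_)
  filter_upwards [hinv] with x hx
  simp [hx]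

theorem koopman_pow_succ_of_ae_leftInverse (hT : MeasurePreserving T μ μ)
    (hT' : MeasurePreserving T' μ μ) (hinv : ∀ᵐ x ∂μ, T' (T x) = x) (g : Lp ℂ 2 μ) (k : ℕ) :
    koopman T hT ((koopman T' hT' ^ (k + 1)) g) = (koopman T' hT' ^ k) g := by
  rw [pow_succ']
  exact koopman_koopman_of_ae_leftInverse hT hT' hinv _

end Koopman

theorem filter_is_orthogonal_projection_of_koopman_general
    {X : Type*} [MeasurableSpace X] (μ : Measure X)
    (T T' : X → X) (hT : MeasurePreserving T μ μ) (hT' : MeasurePreserving T' μ μ)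
    (hinv₁ : ∀ᵐ x ∂μ, T' (T x) = x)
    (f : Lp ℂ 2 μ) (d : ℕ)
    (c : Fin d → ℂ)
    (hmin : ∀ c' : Fin d → ℂ,
      ‖koopman T hT f - ∑ j : Fin d, c j • ((koopman T' hT') ^ (j : ℕ)) f‖ ^ 2 ≤
      ‖koopman T hT f - ∑ j : Fin d, c' j • ((koopman T' hT') ^ (j : ℕ)) f‖ ^ 2)
    (Ud : Lp ℂ 2 μ →ₗ[ℂ] Lp ℂ 2 μ)
    (hUd_f : Ud f = ∑ j : Fin d, c j • ((koopman T' hT') ^ (j : ℕ)) f)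
    (hUd_shift : ∀ j : Fin d, (j : ℕ) ≠ 0 →
      Ud (((koopman T' hT') ^ (j : ℕ)) f) = ((koopman T' hT') ^ ((j : ℕ) - 1)) f) :
    ∀ g ∈ krylov T' hT' f d,
      Ud g = ((Submodule.orthogonalProjectionOnto (krylov T' hT' f d)) (koopman T hT g) : Lp ℂ 2 μ) := by
  set K := krylov T' hT' f d
  have hproj : K.starProjection (koopman T hT f) = ∑ j, c j • (koopman T' hT' ^ (j : ℕ)) f :=
    Submodule.starProjection_eq_sum_of_forall_norm_sub_le (K := K) rfl fun c' =>
      le_of_pow_le_pow_left₀ two_ne_zero (norm_nonneg _) (hmin c')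
  intro g hg
  refine LinearMap.eqOn_span' (f := Ud) (g := (K.starProjection ∘L koopman T hT).toLinearMap)
    ?_ hg
  rintro _ ⟨⟨_ | k, hk⟩, rfl⟩
  · simpa [hUd_f] using hproj.symm
  · have hmem : (koopman T' hT' ^ k) f ∈ K := Submodule.subset_span ⟨⟨k, by omega⟩, rfl⟩
    rw [hUd_shift ⟨k + 1, hk⟩ k.succ_ne_zero]
    change _ = K.starProjection (koopman T hT ((koopman T' hT' ^ (k + 1)) f))
    rw [koopman_pow_succ_of_ae_leftInverse hT hT' hinv₁,
      Submodule.starProjection_eq_self_iff.2 hmem, add_tsub_cancel_right]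

/-- if the Krylov family `ℬ_d = (f, f∘T⁻¹, …, f∘T^{-d+1})` is linearly
independent, `c` is the unique minimizer of the least-squares loss
`J(c) = ∫ |f(Tx) − Σ_j c_j f(T^{-j}x)|² dμ = ‖𝒰f − Σ_j c_j 𝒰'^j f‖²`, and `𝒰_d` is the linear
operator defined on `ℬ_d` by `𝒰_d (f∘T^{-j}) = f∘T^{-j+1}` (for `1 ≤ j ≤ d−1`) and
`𝒰_d f = Σ_j c_j f∘T^{-j}`, then on `𝒦_d` the operator `𝒰_d` coincides with the
`L²_μ`-orthogonal projection of the Koopman operator `𝒰` onto `𝒦_d`. -/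
theorem filter_is_orthogonal_projection_of_koopman
    {X : Type*} [MeasurableSpace X] (μ : Measure X) [IsProbabilityMeasure μ]
    (T T' : X → X) (hT : MeasurePreserving T μ μ) (hT' : MeasurePreserving T' μ μ)
    (hinv₁ : ∀ᵐ x ∂μ, T' (T x) = x) (hinv₂ : ∀ᵐ x ∂μ, T (T' x) = x)
    (f : Lp ℂ 2 μ) (d : ℕ) (hd : 0 < d)
    (hli : LinearIndependent ℂ (fun j : Fin d => ((koopman T' hT') ^ (j : ℕ)) f))
    (c : Fin d → ℂ)
    (hmin : ∀ c' : Fin d → ℂ,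
      ‖koopman T hT f - ∑ j : Fin d, c j • ((koopman T' hT') ^ (j : ℕ)) f‖ ^ 2 ≤
      ‖koopman T hT f - ∑ j : Fin d, c' j • ((koopman T' hT') ^ (j : ℕ)) f‖ ^ 2)
    (huniq : ∀ c' : Fin d → ℂ,
      (∀ c'' : Fin d → ℂ,
        ‖koopman T hT f - ∑ j : Fin d, c' j • ((koopman T' hT') ^ (j : ℕ)) f‖ ^ 2 ≤
        ‖koopman T hT f - ∑ j : Fin d, c'' j • ((koopman T' hT') ^ (j : ℕ)) f‖ ^ 2) → c' = c)
    (Ud : Lp ℂ 2 μ →ₗ[ℂ] Lp ℂ 2 μ)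
    (hUd_f : Ud f = ∑ j : Fin d, c j • ((koopman T' hT') ^ (j : ℕ)) f)
    (hUd_shift : ∀ j : Fin d, (j : ℕ) ≠ 0 →
      Ud (((koopman T' hT') ^ (j : ℕ)) f) = ((koopman T' hT') ^ ((j : ℕ) - 1)) f) :
    ∀ g ∈ krylov T' hT' f d,
      Ud g = ((Submodule.orthogonalProjectionOnto (krylov T' hT' f d)) (koopman T hT g) : Lp ℂ 2 μ) :=
  filter_is_orthogonal_projection_of_koopman_general μ T T' hT hT' hinv₁ f d c hmin Ud hUd_f
    hUd_shift
end

section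
/- Let ν be a Borel probability measure on the unit circle 𝕋 = {z ∈ ℂ : |z| = 1}. If the function z ↦ z⁻¹ (equivalently, z ↦ z̄ on 𝕋) belongs to the closure in L²(𝕋, ν; ℂ) of the linear span of the monomials {z ↦ zⁿ : n ≥ 0}, then that closed linear span equals all of L²(𝕋, ν; ℂ); that is, the polynomials in z are dense in L²(𝕋, ν; ℂ). -/
/-! Multiplication by `z⁻¹` is a bounded operator on `Lᵖ(ν)` sending `zⁿ⁺¹` to `zⁿ` and `1` to
`z⁻¹`. So if `z⁻¹` lies in the closed span `S` of the monomials `zⁿ`, `n ≥ 0`, then `S` is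
invariant under it and contains every `z⁻ⁿ`, hence all Laurent polynomials. These are dense in
`C(𝕋, ℂ)` by Stone–Weierstrass, and `C(𝕋, ℂ)` is dense in `Lᵖ(ν)` for `p < ∞`. -/

open MeasureTheory Filter

noncomputable instance : MeasurableSpace Circle := borel Circle
instance : BorelSpace Circle := ⟨rfl⟩

open Set Submodule

theorem Submodule.mapsTo_topologicalClosure_span {𝕜 E : Type*} [Semiring 𝕜] [AddCommMonoid E]
    [Module 𝕜 E] [TopologicalSpace E] [ContinuousAdd E] [ContinuousConstSMul 𝕜 E]
    {T : E →L[𝕜] E} {s : Set E} (h : MapsTo T s (span 𝕜 s).topologicalClosure) :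
    MapsTo T (span 𝕜 s).topologicalClosure (span 𝕜 s).topologicalClosure :=
  have hspan : span 𝕜 s ≤ (span 𝕜 s).topologicalClosure.comap (T : E →ₗ[𝕜] E) := span_le.2 h
  fun _ hx => topologicalClosure_minimal _ hspan
    (isClosed_topologicalClosure _ |>.preimage T.continuous) hx

namespace Circle

noncomputable def laurentMonomial (k : ℤ) : C(Circle, ℂ) :=
  ⟨fun z => (z : ℂ) ^ k, continuous_subtype_val.zpow₀ k fun z => .inl (coe_ne_zero z)⟩

@[simp]
theorem laurentMonomial_apply (k : ℤ) (z : Circle) : laurentMonomial k z = (z : ℂ) ^ k := rfl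

theorem laurentMonomial_zero : laurentMonomial 0 = 1 := by
  ext z
  simp

theorem laurentMonomial_add (j k : ℤ) :
    laurentMonomial (j + k) = laurentMonomial j * laurentMonomial k := by
  ext z
  simp [zpow_add₀ (coe_ne_zero z)]

theorem star_laurentMonomial (k : ℤ) : star (laurentMonomial k) = laurentMonomial (-k) := by
  ext z
  simp [← coe_inv_eq_conj, zpow_neg]

noncomputable def laurentSubalgebra : StarSubalgebra ℂ C(Circle, ℂ) where
  toSubalgebra := Algebra.adjoin ℂ (range laurentMonomial)
  star_mem' := by
    change Algebra.adjoin ℂ (range laurentMonomial) ≤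
      star (Algebra.adjoin ℂ (range laurentMonomial))
    refine Algebra.adjoin_le ?_
    rintro - ⟨k, rfl⟩
    exact Algebra.subset_adjoin ⟨-k, by rw [← star_laurentMonomial]⟩

theorem laurentSubalgebra_toSubmodule :
    Subalgebra.toSubmodule laurentSubalgebra.toSubalgebra = span ℂ (range laurentMonomial) := by
  refine Algebra.adjoin_eq_span_of_subset _ fun f hf => subset_span ?_
  induction hf using Submonoid.closure_induction with
  | mem f hf => exact hf
  | one => exact ⟨0, laurentMonomial_zero⟩
  | mul f g _ _ hf hg =>
    obtain ⟨⟨j, rfl⟩, ⟨k, rfl⟩⟩ := And.intro hf hg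
    exact ⟨j + k, laurentMonomial_add j k⟩

theorem span_laurentMonomial_closure_eq_top :
    (span ℂ (range laurentMonomial)).topologicalClosure = ⊤ := by
  have hsep : laurentSubalgebra.SeparatesPoints := by
    intro x y hxy
    refine ⟨_, ⟨laurentMonomial 1, Algebra.subset_adjoin ⟨1, rfl⟩, rfl⟩, ?_⟩
    simpa using fun h => hxy (Circle.ext h)
  have htop := ContinuousMap.starSubalgebra_topologicalClosure_eq_top_of_separatesPoints _ hsep
  rw [← laurentSubalgebra_toSubmodule, eq_top_iff']
  exact fun f => (htop ▸ StarSubalgebra.mem_top : f ∈ laurentSubalgebra.topologicalClosure)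

section Lp

open scoped ENNReal

variable (p : ℝ≥0∞) [Fact (1 ≤ p)] (ν : Measure Circle) [IsFiniteMeasure ν]

noncomputable def laurentLp (k : ℤ) : Lp ℂ p ν :=
  ContinuousMap.toLp p ν ℂ (laurentMonomial k)

noncomputable def mulLaurentLp (j : ℤ) : Lp ℂ p ν →L[ℂ] Lp ℂ p ν :=
  (ContinuousLinearMap.mul ℂ ℂ).holderL ν ∞ p p (ContinuousMap.toLp ∞ ν ℂ (laurentMonomial j))

variable {p ν}

theorem coeFn_laurentLp (k : ℤ) : laurentLp p ν k =ᵐ[ν] fun z => (z : ℂ) ^ k :=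
  ContinuousMap.coeFn_toLp _ _

theorem coeFn_mulLaurentLp (j : ℤ) (f : Lp ℂ p ν) :
    mulLaurentLp p ν j f =ᵐ[ν] fun z => (z : ℂ) ^ j * f z := by
  set u := ContinuousMap.toLp ∞ ν ℂ (laurentMonomial j)
  filter_upwards [(ContinuousLinearMap.mul ℂ ℂ).coeFn_holder (r := p) u f,
    ContinuousMap.coeFn_toLp (p := ∞) (𝕜 := ℂ) ν (laurentMonomial j)] with z h1 h2
  rw [mulLaurentLp, ContinuousLinearMap.holderL_apply_apply, h1, ContinuousLinearMap.mul_apply',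
    h2, laurentMonomial_apply]

theorem mulLaurentLp_laurentLp (j k : ℤ) :
    mulLaurentLp p ν j (laurentLp p ν k) = laurentLp p ν (j + k) := by
  refine Lp.ext ?_
  filter_upwards [coeFn_mulLaurentLp j (laurentLp p ν k), coeFn_laurentLp (p := p) (ν := ν) k,
    coeFn_laurentLp (p := p) (ν := ν) (j + k)] with z h1 h2 h3
  rw [h1, h2, h3, zpow_add₀ (coe_ne_zero z)]

theorem span_laurentLp_closure_eq_top (hp : p ≠ ∞) :
    (span ℂ (range (laurentLp p ν))).topologicalClosure = ⊤ := by
  have := (ContinuousMap.toLp_denseRange ℂ ν ℂ hp).topologicalClosure_map_submodule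
    span_laurentMonomial_closure_eq_top
  rwa [map_span, ← range_comp] at this

theorem span_laurentLp_natCast_closure_eq_top (hp : p ≠ ∞)
    (h : laurentLp p ν (-1) ∈ (span ℂ (range fun n : ℕ => laurentLp p ν n)).topologicalClosure) :
    (span ℂ (range fun n : ℕ => laurentLp p ν n)).topologicalClosure = ⊤ := by
  set S := (span ℂ (range fun n : ℕ => laurentLp p ν n)).topologicalClosure
  have hS : MapsTo (mulLaurentLp p ν (-1)) S S := by
    refine mapsTo_topologicalClosure_span ?_
    rintro - ⟨n, rfl⟩
    rw [mulLaurentLp_laurentLp]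
    rcases n with _ | n
    · rw [Nat.cast_zero, add_zero]; exact h
    · exact le_topologicalClosure _ (subset_span ⟨n, by simp⟩)
  have hneg : ∀ n : ℕ, laurentLp p ν (-n) ∈ S := by
    intro n
    induction n with
    | zero => exact le_topologicalClosure _ (subset_span ⟨0, rfl⟩)
    | succ n ih => simpa [mulLaurentLp_laurentLp, add_comm] using hS ih
  have hall : ∀ k : ℤ, laurentLp p ν k ∈ S := by
    intro k
    obtain ⟨n, rfl | rfl⟩ := Int.eq_nat_or_neg k
    · exact le_topologicalClosure _ (subset_span ⟨n, rfl⟩)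
    · exact hneg n
  rw [eq_top_iff, ← span_laurentLp_closure_eq_top hp]
  exact topologicalClosure_minimal _ (span_le.2 <| range_subset_iff.2 hall)
    (isClosed_topologicalClosure _)

end Lp

end Circle

/-- Kolmogorov-type density transfer on the circle: if `z ↦ z⁻¹` lies in the
`L²(ν)`-closure of the span of the monomials `z ↦ zⁿ`, `n ≥ 0`, then the polynomials are
dense in `L²(𝕋, ν; ℂ)`.  Here `mono n` and `invm` are the elements of `L²(ν)` represented
by the functions `z ↦ zⁿ` and `z ↦ z⁻¹` respectively. -/
theorem polynomials_dense_of_inv_mem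
    (ν : Measure Circle) [IsProbabilityMeasure ν]
    (mono : ℕ → Lp ℂ 2 ν)
    (hmono : ∀ n : ℕ, (mono n : Circle → ℂ) =ᵐ[ν] fun z : Circle => (z : ℂ) ^ n)
    (invm : Lp ℂ 2 ν)
    (hinvm : (invm : Circle → ℂ) =ᵐ[ν] fun z : Circle => ((z : ℂ))⁻¹)
    (hmem : invm ∈ (Submodule.span ℂ (Set.range mono)).topologicalClosure) :
    (Submodule.span ℂ (Set.range mono)).topologicalClosure = ⊤ := by
  have hmono_eq : mono = fun n : ℕ => Circle.laurentLp 2 ν n := funext fun n =>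
    Lp.ext <| (hmono n).trans <| by simpa using (Circle.coeFn_laurentLp (p := 2) (ν := ν) n).symm
  have hinvm_eq : invm = Circle.laurentLp 2 ν (-1) :=
    Lp.ext <| hinvm.trans <| by simpa using (Circle.coeFn_laurentLp (p := 2) (ν := ν) (-1)).symm
  subst hmono_eq hinvm_eq
  exact Circle.span_laurentLp_natCast_closure_eq_top ENNReal.ofNat_ne_top hmem
end

section
/- Let T be an invertible measure-preserving transformation of a probability space (X, μ) whose Koopman operator 𝒰_T has purely discrete spectrum, i.e. there exist a countable orthonormal basis (φ_i)_{i∈ℕ} of L²_μ and scalars (λ_i)_{i∈ℕ} ⊆ ℂ with φ_i ∘ T = λ_i φ_i in L²_μ for every i. Then every observable f ∈ L²_μ is weakly predictive: f∘T belongs to the closed linear span of {f∘T^{−j} : j ≥ 0} in L²_μ. -/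
open MeasureTheory Filter

/-!
Write `V = 𝒰_{T⁻¹}`. An eigenfunction `𝒰_T φ = λ φ` satisfies `V φ = λ⁻¹ φ` with `|λ⁻¹| ≤ 1`, so
its `V`-orbit is totally bounded. Vectors with totally bounded orbit under a contraction form a
closed subspace, which then contains the closed span of the eigenfunctions: every `g ∈ L²_μ` is
almost periodic. By pigeonhole, such an orbit has two points `V^m g`, `V^(m+n) g` (`n ≥ 1`) within
`ε`, and since `V` is an isometry `g` and `V^n g` are then within `ε`. For `g = f ∘ T` this
says `f ∘ T` is within `ε` of `V^(n-1) f = f ∘ T^(-(n-1))`.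
-/

open Set
open scoped Pointwise

lemma TotallyBounded.add {E : Type*} [SeminormedAddCommGroup E] {s t : Set E}
    (hs : TotallyBounded s) (ht : TotallyBounded t) : TotallyBounded (s + t) := by
  rw [Metric.totallyBounded_iff] at hs ht ⊢
  intro ε hε
  obtain ⟨a, ha, hsa⟩ := hs (ε / 2) (half_pos hε)
  obtain ⟨b, hb, htb⟩ := ht (ε / 2) (half_pos hε)
  refine ⟨a + b, ha.add hb, ?_⟩
  rintro _ ⟨x, hx, y, hy, rfl⟩
  obtain ⟨x', hx', hxx'⟩ := mem_iUnion₂.1 (hsa hx)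
  obtain ⟨y', hy', hyy'⟩ := mem_iUnion₂.1 (htb hy)
  refine mem_iUnion₂.2 ⟨x' + y', add_mem_add hx' hy', ?_⟩
  rw [Metric.mem_ball] at hxx' hyy' ⊢
  calc dist (x + y) (x' + y') ≤ dist x x' + dist y y' := dist_add_add_le _ _ _ _
    _ < ε / 2 + ε / 2 := add_lt_add hxx' hyy'
    _ = ε := add_halves ε

section PseudoMetric

variable {α : Type*} [PseudoMetricSpace α]

lemma totallyBounded_of_forall_exists_totallyBounded_dist_lt {s : Set α}
    (h : ∀ ε > 0, ∃ t, TotallyBounded t ∧ ∀ x ∈ s, ∃ y ∈ t, dist x y < ε) :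
    TotallyBounded s := by
  refine Metric.totallyBounded_iff.2 fun ε hε => ?_
  obtain ⟨t, ht, hst⟩ := h (ε / 2) (half_pos hε)
  obtain ⟨c, hc, htc⟩ := Metric.totallyBounded_iff.1 ht (ε / 2) (half_pos hε)
  refine ⟨c, hc, fun x hx => ?_⟩
  obtain ⟨y, hy, hxy⟩ := hst x hx
  obtain ⟨z, hz, hyz⟩ := mem_iUnion₂.1 (htc hy)
  rw [Metric.mem_ball] at hyz
  exact mem_iUnion₂.2 ⟨z, hz, Metric.mem_ball.2 (by linarith [dist_triangle x y z])⟩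

lemma exists_lt_dist_lt_of_totallyBounded_range {u : ℕ → α} (hu : TotallyBounded (range u))
    {ε : ℝ} (hε : 0 < ε) : ∃ m n, m < n ∧ dist (u m) (u n) < ε := by
  obtain ⟨t, ht, hut⟩ := Metric.totallyBounded_iff.1 hu (ε / 2) (half_pos hε)
  have hcover : ∀ n, ∃ c ∈ t, dist (u n) c < ε / 2 := fun n => by
    simpa using hut (mem_range_self n)
  choose c hct hc using hcover
  obtain ⟨m, n, hmn, hcmn⟩ := ht.exists_lt_map_eq_of_forall_mem hct
  refine ⟨m, n, hmn, ?_⟩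
  calc dist (u m) (u n) ≤ dist (u m) (c m) + dist (u n) (c n) := by
        rw [hcmn]; exact dist_triangle_right _ _ _
    _ < ε := by linarith [hc m, hc n]

end PseudoMetric

namespace ContinuousLinearMap

variable {𝕜 E : Type*} [NormedField 𝕜] [NormedAddCommGroup E] [NormedSpace 𝕜 E]
  (V : E →L[𝕜] E)

def almostPeriodicSubmodule : Submodule 𝕜 E where
  carrier := {x | TotallyBounded (range fun n : ℕ => (V ^ n) x)}
  zero_mem' := by simp [totallyBounded_singleton]
  add_mem' {x y} hx hy := by
    refine (TotallyBounded.add hx hy).subset (range_subset_iff.2 fun n => ?_)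
    rw [map_add]
    exact add_mem_add (mem_range_self n) (mem_range_self n)
  smul_mem' c x hx := by
    refine (hx.image (uniformContinuous_const_smul c)).subset (range_subset_iff.2 fun n => ?_)
    rw [map_smul]
    exact mem_image_of_mem _ (mem_range_self n)

variable {V}

lemma norm_pow_apply_le (hV : ∀ x, ‖V x‖ ≤ ‖x‖) (n : ℕ) (x : E) : ‖(V ^ n) x‖ ≤ ‖x‖ := by
  induction n generalizing x with
  | zero => simp
  | succ n ih => exact (ih (V x)).trans (hV x)

lemma norm_pow_apply (hV : ∀ x, ‖V x‖ = ‖x‖) (n : ℕ) (x : E) : ‖(V ^ n) x‖ = ‖x‖ := by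
  induction n generalizing x with
  | zero => simp
  | succ n ih => exact (ih (V x)).trans (hV x)

lemma isClosed_almostPeriodicSubmodule (hV : ∀ x, ‖V x‖ ≤ ‖x‖) :
    IsClosed (almostPeriodicSubmodule V : Set E) := by
  refine isClosed_of_closure_subset fun x hx => ?_
  refine totallyBounded_of_forall_exists_totallyBounded_dist_lt fun ε hε => ?_
  obtain ⟨y, hy, hxy⟩ := Metric.mem_closure_iff.1 hx ε hε
  refine ⟨_, hy, forall_mem_range.2 fun n => ⟨(V ^ n) y, mem_range_self n, ?_⟩⟩
  rw [dist_eq_norm, ← map_sub]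
  exact (norm_pow_apply_le hV n _).trans_lt (by rwa [← dist_eq_norm])

lemma mem_almostPeriodicSubmodule_of_apply_eq_smul [ProperSpace 𝕜] (hV : ∀ x, ‖V x‖ ≤ ‖x‖)
    {x : E} {a : 𝕜} (hx : V x = a • x) : x ∈ almostPeriodicSubmodule V := by
  rcases eq_or_ne x 0 with rfl | hx0
  · exact zero_mem _
  have ha : ‖a‖ ≤ 1 := by
    have := hV x
    rwa [hx, norm_smul, mul_le_iff_le_one_left (norm_pos_iff.2 hx0)] at this
  have hpow : ∀ n : ℕ, (V ^ n) x = a ^ n • x := fun n => by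
    induction n with
    | zero => simp
    | succ n ih => rw [pow_succ, mul_apply_eq_comp, hx, map_smul, ih, smul_smul, pow_succ']
  refine ((isCompact_closedBall (0 : 𝕜) 1).image (continuous_id.smul continuous_const :
    Continuous fun b : 𝕜 => b • x)).totallyBounded.subset (range_subset_iff.2 fun n => ?_)
  rw [hpow n]
  exact mem_image_of_mem _ (by simpa using pow_le_one₀ (norm_nonneg a) ha)

lemma apply_eq_inv_smul_of_leftInverse {U : E →L[𝕜] E} (hVU : Function.LeftInverse V U)
    {x : E} {c : 𝕜} (hx : U x = c • x) : V x = c⁻¹ • x := by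
  rcases eq_or_ne c 0 with rfl | hc
  · rw [← hVU x, hx]
    simp
  · calc V x = c⁻¹ • V (c • x) := by rw [map_smul, inv_smul_smul₀ hc]
      _ = c⁻¹ • x := by rw [← hx, hVU x]

lemma exists_pos_dist_pow_apply_self_lt (hV : ∀ x, ‖V x‖ = ‖x‖) {x : E}
    (hx : x ∈ almostPeriodicSubmodule V) {ε : ℝ} (hε : 0 < ε) :
    ∃ n, 0 < n ∧ dist ((V ^ n) x) x < ε := by
  obtain ⟨m, n, hmn, hdist⟩ := exists_lt_dist_lt_of_totallyBounded_range hx hε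
  obtain ⟨k, rfl⟩ := Nat.exists_eq_add_of_lt hmn
  refine ⟨k + 1, k.succ_pos, ?_⟩
  rwa [add_assoc, pow_add, mul_apply_eq_comp, dist_eq_norm, ← map_sub, norm_pow_apply hV,
    ← dist_eq_norm, dist_comm] at hdist

lemma mem_closure_range_pow_apply_of_leftInverse (hV : ∀ x, ‖V x‖ = ‖x‖) {U : E →L[𝕜] E}
    (hVU : Function.LeftInverse V U) {f : E} (hf : U f ∈ almostPeriodicSubmodule V) :
    U f ∈ closure (range fun n : ℕ => (V ^ n) f) := by
  refine Metric.mem_closure_iff.2 fun ε hε => ?_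
  obtain ⟨n, hn, hdist⟩ := exists_pos_dist_pow_apply_self_lt hV hf hε
  obtain ⟨k, rfl⟩ := Nat.exists_eq_add_of_lt hn
  refine ⟨(V ^ k) f, mem_range_self k, ?_⟩
  rwa [zero_add, pow_succ, mul_apply_eq_comp, hVU f, dist_comm] at hdist

end ContinuousLinearMap

section Koopman

variable {X : Type*} [MeasurableSpace X] {μ : Measure X} {T T' : X → X}

lemma norm_koopman_apply (hT : MeasurePreserving T μ μ) (g : Lp ℂ 2 μ) :
    ‖koopman T hT g‖ = ‖g‖ :=
  (Lp.compMeasurePreservingₗᵢ ℂ T hT).norm_map g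

lemma leftInverse_koopman (hT : MeasurePreserving T μ μ) (hT' : MeasurePreserving T' μ μ)
    (h : ∀ᵐ x ∂μ, T (T' x) = x) : Function.LeftInverse (koopman T' hT') (koopman T hT) := by
  intro g
  refine Lp.ext ?_
  have hTg : (koopman T hT g : X → ℂ) =ᵐ[μ] g ∘ T := Lp.coeFn_compMeasurePreserving g hT
  calc (koopman T' hT' (koopman T hT g) : X → ℂ)
      =ᵐ[μ] (koopman T hT g : X → ℂ) ∘ T' := Lp.coeFn_compMeasurePreserving _ hT'
    _ =ᵐ[μ] (g ∘ T) ∘ T' := hT'.quasiMeasurePreserving.ae_eq_comp hTg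
    _ =ᵐ[μ] g := h.mono fun x hx => by simp [hx]

end Koopman

theorem weakly_predictive_of_discrete_spectrum_general
    {X : Type*} [MeasurableSpace X] (μ : Measure X)
    (T T' : X → X) (hT : MeasurePreserving T μ μ) (hT' : MeasurePreserving T' μ μ)
    (hinv₂ : ∀ᵐ x ∂μ, T (T' x) = x)
    (φ : ℕ → Lp ℂ 2 μ)
    (htotal : (Submodule.span ℂ (Set.range φ)).topologicalClosure = ⊤)
    (lam : ℕ → ℂ) (heig : ∀ i, koopman T hT (φ i) = lam i • φ i) :
    ∀ f : Lp ℂ 2 μ,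
      koopman T hT f ∈
        (Submodule.span ℂ
          (Set.range fun j : ℕ => ((koopman T' hT') ^ j) f)).topologicalClosure := by
  intro f
  have hV := norm_koopman_apply hT'
  have hVU := leftInverse_koopman hT hT' hinv₂
  have hφ : range φ ⊆ (koopman T' hT').almostPeriodicSubmodule := by
    rintro _ ⟨i, rfl⟩
    exact ContinuousLinearMap.mem_almostPeriodicSubmodule_of_apply_eq_smul (fun g => (hV g).le)
      (ContinuousLinearMap.apply_eq_inv_smul_of_leftInverse hVU (heig i))
  have hall : ∀ g, g ∈ (koopman T' hT').almostPeriodicSubmodule := by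
    rw [← Submodule.eq_top_iff', eq_top_iff, ← htotal]
    exact Submodule.topologicalClosure_minimal _ (Submodule.span_le.2 hφ)
      (ContinuousLinearMap.isClosed_almostPeriodicSubmodule fun g => (hV g).le)
  rw [← SetLike.mem_coe, Submodule.topologicalClosure_coe]
  exact closure_mono Submodule.subset_span
    (ContinuousLinearMap.mem_closure_range_pow_apply_of_leftInverse hV hVU (hall _))

/-- if the Koopman operator of an invertible measure-preserving transformation
`T` has purely discrete spectrum, i.e. there is a countable orthonormal basis `(φ_i)` of
`L²_μ` consisting of eigenfunctions (`φ_i ∘ T = λ_i φ_i`), then every observable `f ∈ L²_μ`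
is weakly predictive: `f∘T` belongs to the closed linear span of `{f∘T^{-j} : j ≥ 0}`. -/
theorem weakly_predictive_of_discrete_spectrum
    {X : Type*} [MeasurableSpace X] (μ : Measure X) [IsProbabilityMeasure μ]
    (T T' : X → X) (hT : MeasurePreserving T μ μ) (hT' : MeasurePreserving T' μ μ)
    (hinv₁ : ∀ᵐ x ∂μ, T' (T x) = x) (hinv₂ : ∀ᵐ x ∂μ, T (T' x) = x)
    (φ : ℕ → Lp ℂ 2 μ) (hon : Orthonormal ℂ φ)
    (htotal : (Submodule.span ℂ (Set.range φ)).topologicalClosure = ⊤)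
    (lam : ℕ → ℂ) (heig : ∀ i, koopman T hT (φ i) = lam i • φ i) :
    ∀ f : Lp ℂ 2 μ,
      koopman T hT f ∈
        (Submodule.span ℂ
          (Set.range fun j : ℕ => ((koopman T' hT') ^ j) f)).topologicalClosure :=
  weakly_predictive_of_discrete_spectrum_general μ T T' hT hT' hinv₂ φ htotal lam heig
end
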